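/- If the clustering-difference graph CDG(C, C') decomposes into vertex-disjoint directed cycles, then the transformation distance satisfies d(C, C') ≤ 2, i.e., C can be transformed into C' by at most two cyclical moves. -/

import Mathlib

variable {X : Type*} [Fintype X] [DecidableEq X] {k : ℕ}

/-- The clustering-difference graph `CDG(c, c'')` (one edge `c x → c'' x` for each
item `x` with `c x ≠ c'' x`) is a single directed cycle: there are `m + 1` distinct
cluster indices `v 0, ..., v m` and the items moved are exactly one per edge
`v i → v (i+1)` (indices mod `m + 1`). -/
def IsCyclicalMove (c c'' : X → Fin k) : Prop :=
  ∃ (m : ℕ) (v : Fin (m + 1) ↪ Fin k)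
    (e : {x : X // c x ≠ c'' x} ≃ Fin (m + 1)),
    ∀ x : {x : X // c x ≠ c'' x}, c x.1 = v (e x) ∧ c'' x.1 = v (e x + 1)

/-- The clustering-difference graph `CDG(c, c'')` is a single directed path: there
are `m + 2` distinct cluster indices `v 0, ..., v (m+1)` and the items moved are
exactly one per edge `v i → v (i+1)`, `0 ≤ i ≤ m`. -/
def IsSequentialMove (c c'' : X → Fin k) : Prop :=
  ∃ (m : ℕ) (v : Fin (m + 2) ↪ Fin k)
    (e : {x : X // c x ≠ c'' x} ≃ Fin (m + 1)),
    ∀ x : {x : X // c x ≠ c'' x}, c x.1 = v (e x).castSucc ∧ c'' x.1 = v (e x).succ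

/-- An elementary move: a cyclical or a sequential move. -/
def IsMove (c c'' : X → Fin k) : Prop :=
  IsCyclicalMove c c'' ∨ IsSequentialMove c c''

/-- The transformation distance: the minimum number of elementary moves needed to
transform `c` into `c'`. -/
noncomputable def transDist (c c' : X → Fin k) : ℕ :=
  sInf {n | ∃ f : ℕ → X → Fin k, f 0 = c ∧ f n = c' ∧ ∀ i < n, IsMove (f i) (f (i + 1))}

/-- The size of cluster `i` in the clustering `c`. -/
def clusterSize (c : X → Fin k) (i : Fin k) : ℕ :=
  (Finset.univ.filter fun x => c x = i).card

/-- The outdegree of vertex `i` in `CDG(c, c')`. -/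
def cdgOutdeg (c c' : X → Fin k) (i : Fin k) : ℕ :=
  (Finset.univ.filter fun x => c x = i ∧ c' x ≠ i).card

/-- The indegree of vertex `i` in `CDG(c, c')`. -/
def cdgIndeg (c c' : X → Fin k) (i : Fin k) : ℕ :=
  (Finset.univ.filter fun x => c' x = i ∧ c x ≠ i).card

/-- The shared degree of vertex `i` in `CDG(c, c')`. -/
def sharedDeg (c c' : X → Fin k) (i : Fin k) : ℕ :=
  min (cdgIndeg c c' i) (cdgOutdeg c c' i)

/-- The edges of `CDG(c, c')` labeled by the items in `B` form a single directed
cycle through `m + 1` distinct cluster indices. -/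
def IsCycleOn (c c' : X → Fin k) (B : Finset X) : Prop :=
  ∃ (m : ℕ) (v : Fin (m + 1) ↪ Fin k) (g : Fin (m + 1) → X),
    Function.Injective g ∧ Finset.univ.image g = B ∧
    ∀ i, c (g i) = v i ∧ c' (g i) = v (i + 1)

/-- The edges of `CDG(c, c')` labeled by the items in `B` form a single directed
path through `m + 2` distinct cluster indices. -/
def IsPathOn (c c' : X → Fin k) (B : Finset X) : Prop :=
  ∃ (m : ℕ) (v : Fin (m + 2) ↪ Fin k) (g : Fin (m + 1) → X),
    Function.Injective g ∧ Finset.univ.image g = B ∧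
    ∀ i : Fin (m + 1), c (g i) = v i.castSucc ∧ c' (g i) = v i.succ


/-! Redirect the closing edge of the `j`-th cycle to the first vertex of the `(j+1)`-st one:
this splices all cycles into a single cycle, so it is one cyclical move. Afterwards only the
redirected items are misplaced: the one of cycle `j` sits at the first vertex of cycle `j+1`
and belongs at the first vertex of cycle `j`, so together they form one cycle through the
first vertices, traversed backwards, and a second cyclical move finishes (with a single
cycle there is nothing left to do). -/

open Finset

section SigmaCycle

variable {s : ℕ} {m : Fin (s + 1) → ℕ}

-- `⟨j, i⟩` is vertex `i` of the `j`-th of `s + 1` cycles, cycle `j` having `m j + 1` vertices.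
def sigmaCycleSucc (p : Σ j, Fin (m j + 1)) : Σ j, Fin (m j + 1) :=
  if p.2 = Fin.last _ then ⟨p.1 + 1, 0⟩ else ⟨p.1, p.2 + 1⟩

lemma sigmaCycleSucc_ne_self {p : Σ j, Fin (m j + 1)} (hp : p.2 + 1 ≠ p.2) :
    sigmaCycleSucc p ≠ p := by
  obtain ⟨j, i⟩ := p
  unfold sigmaCycleSucc
  dsimp only at hp ⊢
  split_ifs with hi
  · intro h
    obtain ⟨hj, hi0⟩ := Sigma.mk.inj_iff.mp h
    have hm : m j = 0 := by
      simpa [hi] using ((Fin.heq_ext_iff (by rw [hj])).mp hi0).symm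
    have : Subsingleton (Fin (m j + 1)) := by rw [hm]; exact Fin.subsingleton_one
    exact hp (Subsingleton.elim _ _)
  · simpa using hp

instance : NeZero (∑ j, (m j + 1)) :=
  ⟨(sum_pos (fun _ _ => Nat.succ_pos _) univ_nonempty).ne'⟩

theorem finSigmaFinEquiv_sigmaCycleSucc (p : Σ j, Fin (m j + 1)) :
    finSigmaFinEquiv (sigmaCycleSucc p) = finSigmaFinEquiv p + 1 := by
  set L : ℕ → ℕ := fun t => if h : t < s + 1 then m ⟨t, h⟩ + 1 else 0
  have hL (j : Fin (s + 1)) : L j = m j + 1 := dif_pos j.2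
  have hval (q : Σ j, Fin (m j + 1)) :
      (finSigmaFinEquiv q : ℕ) = ∑ t ∈ range q.1, L t + q.2 := by
    rw [finSigmaFinEquiv_apply, ← Fin.sum_univ_eq_sum_range]
    congr 1
    exact sum_congr rfl fun t _ => (hL (Fin.castLE q.1.2.le t)).symm
  have htotal : ∑ j : Fin (s + 1), (m j + 1) = ∑ t ∈ range (s + 1), L t := by
    rw [← Fin.sum_univ_eq_sum_range]
    exact sum_congr rfl fun j _ => (hL j).symm
  suffices h : (finSigmaFinEquiv (sigmaCycleSucc p) : ℕ) = finSigmaFinEquiv p + 1 ∨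
      ((finSigmaFinEquiv (sigmaCycleSucc p) : ℕ) = 0 ∧
        (finSigmaFinEquiv p : ℕ) + 1 = ∑ j : Fin (s + 1), (m j + 1)) by
    rw [Fin.ext_iff, Fin.val_add, Fin.val_one', Nat.add_mod_mod]
    rcases h with h | ⟨h, h'⟩
    · rw [← h, Nat.mod_eq_of_lt (Fin.isLt _)]
    · rw [h, h', Nat.mod_self]
  obtain ⟨j, i⟩ := p
  rcases eq_or_ne i (Fin.last _) with rfl | hi
  · rw [sigmaCycleSucc, if_pos rfl, hval, hval]
    rcases Nat.lt_or_ge (j.1 + 1) (s + 1) with hj | hj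
    · left
      simp only [Fin.val_add_one_of_lt' hj, sum_range_succ, hL, Fin.val_last, Fin.val_zero]
      ring
    · right
      obtain rfl : j = Fin.last s := Fin.ext (by simp; omega)
      simp [htotal, sum_range_succ, ← hL (Fin.last s), add_assoc]
  · left
    have hi' : ((i + 1 : Fin _) : ℕ) = i + 1 :=
      Fin.val_add_one_of_lt' (Nat.succ_lt_succ (Fin.val_lt_last hi))
    rw [sigmaCycleSucc, if_neg hi, hval, hval]
    simp only [hi']
    ring

end SigmaCycle

section Moves

variable {α : Type*} {c c'' : α → Fin k}

lemma isCyclicalMove_of_equiv {N : ℕ} [NeZero N] (v : Fin N ↪ Fin k)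
    (e : Fin N ≃ {x // c x ≠ c'' x}) (h : ∀ a, c (e a) = v a ∧ c'' (e a) = v (a + 1)) :
    IsCyclicalMove c c'' := by
  obtain ⟨M, rfl⟩ := Nat.exists_eq_succ_of_ne_zero (NeZero.ne N)
  exact ⟨M, v, e.symm, fun x => by simpa using h (e.symm x)⟩

lemma isCyclicalMove_of_sigma {s : ℕ} {m : Fin (s + 1) → ℕ} (v : (Σ j, Fin (m j + 1)) ↪ Fin k)
    (e : (Σ j, Fin (m j + 1)) ≃ {x // c x ≠ c'' x})
    (h : ∀ p, c (e p) = v p ∧ c'' (e p) = v (sigmaCycleSucc p)) :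
    IsCyclicalMove c c'' := by
  refine isCyclicalMove_of_equiv (finSigmaFinEquiv.symm.toEmbedding.trans v)
    (finSigmaFinEquiv.symm.trans e) fun a => ?_
  obtain ⟨p, rfl⟩ := finSigmaFinEquiv.surjective a
  simpa [← finSigmaFinEquiv_sigmaCycleSucc] using h p

end Moves

section Merge

variable {α : Type*} {c c' : α → Fin k} {s : ℕ} {m : Fin (s + 1) → ℕ}

lemma sigmaCycleSucc_of_eq_zero (hs : s = 0) (p : Σ j, Fin (m j + 1)) :
    sigmaCycleSucc p = ⟨p.1, p.2 + 1⟩ := by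
  subst hs
  obtain ⟨j, i⟩ := p
  unfold sigmaCycleSucc
  split_ifs with hi
  · dsimp only at hi ⊢
    have hj : j + 1 = j := Fin.subsingleton_one.elim _ _
    rw [hi, Fin.last_add_one]
    exact Sigma.ext hj ((Fin.heq_ext_iff (congrArg (m · + 1) hj)).mpr rfl)
  · rfl

def mergedClustering (v : (Σ j, Fin (m j + 1)) → Fin k)
    (e : (Σ j, Fin (m j + 1)) ≃ {x // c x ≠ c' x}) (x : α) : Fin k :=
  if h : c x ≠ c' x then v (sigmaCycleSucc (e.symm ⟨x, h⟩)) else c x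

variable (v : (Σ j, Fin (m j + 1)) ↪ Fin k) (e : (Σ j, Fin (m j + 1)) ≃ {x // c x ≠ c' x})

lemma mergedClustering_apply (p : Σ j, Fin (m j + 1)) :
    mergedClustering v e (e p) = v (sigmaCycleSucc p) := by
  simp [mergedClustering, (e p).2]

lemma mergedClustering_of_eq {x : α} (hx : c x = c' x) : mergedClustering v e x = c x :=
  dif_neg (not_not.mpr hx)

variable {v e}

theorem isCyclicalMove_to_mergedClustering
    (hve : ∀ p, c (e p) = v p ∧ c' (e p) = v ⟨p.1, p.2 + 1⟩) :
    IsCyclicalMove c (mergedClustering v e) := by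
  have hD (x : α) : c x ≠ mergedClustering v e x ↔ c x ≠ c' x := by
    refine ⟨fun h hx => h (mergedClustering_of_eq v e hx).symm, fun hx => ?_⟩
    obtain ⟨p, hp⟩ := e.surjective ⟨x, hx⟩
    obtain rfl : (e p : α) = x := congrArg Subtype.val hp
    have hstep : p.2 + 1 ≠ p.2 := fun h => (e p).2 (by rw [(hve p).1, (hve p).2, h])
    rw [mergedClustering_apply, (hve p).1]
    exact fun h => sigmaCycleSucc_ne_self hstep (v.injective h).symm
  exact isCyclicalMove_of_sigma v (e.trans (Equiv.subtypeEquivRight hD).symm)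
    fun p => ⟨(hve p).1, mergedClustering_apply v e p⟩

theorem mergedClustering_eq_of_eq_zero (hs : s = 0)
    (hve : ∀ p, c (e p) = v p ∧ c' (e p) = v ⟨p.1, p.2 + 1⟩) : mergedClustering v e = c' := by
  funext x
  by_cases hx : c x = c' x
  · exact (mergedClustering_of_eq v e hx).trans hx
  obtain ⟨p, hp⟩ := e.surjective ⟨x, hx⟩
  obtain rfl : (e p : α) = x := congrArg Subtype.val hp
  rw [mergedClustering_apply, sigmaCycleSucc_of_eq_zero hs, (hve p).2]

theorem isCyclicalMove_from_mergedClustering (hs : s ≠ 0)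
    (hve : ∀ p, c (e p) = v p ∧ c' (e p) = v ⟨p.1, p.2 + 1⟩) :
    IsCyclicalMove (mergedClustering v e) c' := by
  have hlast (j : Fin (s + 1)) : mergedClustering v e (e ⟨j, Fin.last _⟩) = v ⟨j + 1, 0⟩ ∧
      c' (e ⟨j, Fin.last _⟩) = v ⟨j, 0⟩ := by
    rw [mergedClustering_apply, sigmaCycleSucc, if_pos rfl, (hve _).2, Fin.last_add_one]
    exact ⟨rfl, rfl⟩
  have hne (j : Fin (s + 1)) :
      mergedClustering v e (e ⟨j, Fin.last _⟩) ≠ c' (e ⟨j, Fin.last _⟩) := by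
    rw [(hlast j).1, (hlast j).2]
    intro h
    have := congrArg Sigma.fst (v.injective h)
    simpa [hs] using Fin.one_eq_zero_iff.mp (add_eq_left.mp this)
  let w : Fin (s + 1) → {x // mergedClustering v e x ≠ c' x} :=
    fun t => ⟨e ⟨-t - 1, Fin.last _⟩, hne _⟩
  have hw : Function.Bijective w := by
    refine ⟨fun a b hab => ?_, fun ⟨x, hx⟩ => ?_⟩
    · simp only [w, Subtype.mk.injEq, Subtype.val_inj, e.apply_eq_iff_eq] at hab
      simpa using congrArg Sigma.fst hab
    · have hx' : c x ≠ c' x := fun h => hx ((mergedClustering_of_eq v e h).trans h)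
      obtain ⟨⟨j, i⟩, hp⟩ := e.surjective ⟨x, hx'⟩
      obtain rfl : (e ⟨j, i⟩ : α) = x := congrArg Subtype.val hp
      obtain rfl : i = Fin.last _ := by
        by_contra hi
        rw [mergedClustering_apply, sigmaCycleSucc, if_neg hi, (hve _).2] at hx
        exact hx rfl
      exact ⟨-j - 1, Subtype.ext (congrArg (fun a => (e ⟨a, Fin.last (m a)⟩ : α))
        (show -(-j - 1) - 1 = j by abel))⟩
  refine isCyclicalMove_of_equiv ⟨fun t => v ⟨-t, 0⟩, fun a b h => ?_⟩ (Equiv.ofBijective w hw)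
    fun t => ?_
  · simpa using congrArg Sigma.fst (v.injective h)
  · change mergedClustering v e (e ⟨-t - 1, _⟩) = v ⟨-t, 0⟩ ∧
      c' (e ⟨-t - 1, _⟩) = v ⟨-(t + 1), 0⟩
    rw [(hlast _).1, (hlast _).2]
    exact ⟨congrArg (fun a => v ⟨a, 0⟩) (sub_add_cancel _ _),
      congrArg (fun a => v ⟨a, 0⟩) (neg_add' _ _).symm⟩

end Merge

theorem exists_sigma_enumeration_of_disjoint_cycles (c c' : X → Fin k)
    (CS : Finset (Finset X)) {s : ℕ} (hs : CS.card = s + 1) (hcyc : ∀ B ∈ CS, IsCycleOn c c' B)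
    (hcover : CS.biUnion id = univ.filter fun x => c x ≠ c' x)
    (hdisj : ∀ B ∈ CS, ∀ B' ∈ CS, B ≠ B' → Disjoint (B.image c) (B'.image c)) :
    ∃ (m : Fin (s + 1) → ℕ) (v : (Σ j, Fin (m j + 1)) ↪ Fin k)
      (e : (Σ j, Fin (m j + 1)) ≃ {x // c x ≠ c' x}),
      ∀ p, c (e p) = v p ∧ c' (e p) = v ⟨p.1, p.2 + 1⟩ := by
  set B : Fin (s + 1) ≃ {A // A ∈ CS} := (CS.equivFinOfCardEq hs).symm
  choose m v g _ himg hvg using fun j => hcyc (B j) (B j).2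
  have hgB (j : Fin (s + 1)) (i : Fin (m j + 1)) : g j i ∈ (B j : Finset X) :=
    himg j ▸ mem_image_of_mem _ (mem_univ i)
  have hV : Function.Injective fun p : Σ j, Fin (m j + 1) => v p.1 p.2 := by
    rintro ⟨j, i⟩ ⟨j', i'⟩ h
    obtain rfl : j = j' := by
      by_contra hne
      have hj : v j i ∈ (B j : Finset X).image c := (hvg j i).1 ▸ mem_image_of_mem c (hgB j i)
      have hj' : v j i ∈ (B j' : Finset X).image c := by
        rw [show v j i = v j' i' from h, ← (hvg j' i').1]
        exact mem_image_of_mem c (hgB j' i')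
      exact disjoint_left.mp (hdisj _ (B j).2 _ (B j').2
        fun hB => hne (B.injective (Subtype.ext hB))) hj hj'
    obtain rfl := (v j).injective h
    rfl
  have hD (p : Σ j, Fin (m j + 1)) : c (g p.1 p.2) ≠ c' (g p.1 p.2) := by
    have : g p.1 p.2 ∈ CS.biUnion id := mem_biUnion.mpr ⟨_, (B p.1).2, hgB p.1 p.2⟩
    simpa [hcover] using this
  refine ⟨m, ⟨_, hV⟩, Equiv.ofBijective (fun p => ⟨g p.1 p.2, hD p⟩) ⟨fun p q h => hV ?_, ?_⟩,
    fun p => hvg p.1 p.2⟩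
  · simpa [← (hvg _ _).1] using congrArg (c ∘ Subtype.val) h
  · rintro ⟨x, hx⟩
    obtain ⟨A, hA, hxA⟩ := mem_biUnion.mp (hcover ▸ mem_filter.mpr ⟨mem_univ x, hx⟩)
    obtain ⟨j, hj⟩ := B.surjective ⟨A, hA⟩
    rw [id, show A = B j from congrArg Subtype.val hj.symm, ← himg j] at hxA
    obtain ⟨i, -, rfl⟩ := mem_image.mp hxA
    exact ⟨⟨j, i⟩, rfl⟩

lemma transDist_le_of_cyclicalMoves {α : Type*} {c c' : α → Fin k} {f : ℕ → α → Fin k} {n : ℕ}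
    (h0 : f 0 = c) (hn : f n = c') (hf : ∀ i < n, IsCyclicalMove (f i) (f (i + 1))) :
    transDist c c' ≤ n :=
  Nat.sInf_le ⟨f, h0, hn, fun i hi => Or.inl (hf i hi)⟩

lemma exists_cyclicalMoves_le_two {α : Type*} {c c'' c' : α → Fin k}
    (h₁ : IsCyclicalMove c c'') (h₂ : c'' = c' ∨ IsCyclicalMove c'' c') :
    ∃ (n : ℕ) (f : ℕ → α → Fin k), n ≤ 2 ∧ f 0 = c ∧ f n = c' ∧
      ∀ i < n, IsCyclicalMove (f i) (f (i + 1)) := by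
  let f : ℕ → α → Fin k := fun i => if i = 0 then c else if i = 1 then c'' else c'
  rcases h₂ with rfl | h₂
  · exact ⟨1, f, by norm_num, rfl, rfl, fun i hi => by interval_cases i; exact h₁⟩
  · refine ⟨2, f, le_rfl, rfl, rfl, fun i hi => ?_⟩
    interval_cases i
    exacts [h₁, h₂]

/-- If `CDG(c, c')` decomposes into pairwise vertex-disjoint directed cycles, then
`d(c, c') ≤ 2`; indeed `c` can be transformed into `c'` by at most two cyclical
moves. -/
theorem stmt_10 (c c' : X → Fin k) (CS : Finset (Finset X))
    (hcyc : ∀ B ∈ CS, IsCycleOn c c' B)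
    (hcover : CS.biUnion id = Finset.univ.filter fun x => c x ≠ c' x)
    (hdisj : ∀ B ∈ CS, ∀ B' ∈ CS, B ≠ B' → Disjoint (B.image c) (B'.image c)) :
    transDist c c' ≤ 2 ∧
    ∃ (n : ℕ) (f : ℕ → X → Fin k), n ≤ 2 ∧ f 0 = c ∧ f n = c' ∧
      ∀ i < n, IsCyclicalMove (f i) (f (i + 1)) := by
  suffices h : ∃ (n : ℕ) (f : ℕ → X → Fin k), n ≤ 2 ∧ f 0 = c ∧ f n = c' ∧
      ∀ i < n, IsCyclicalMove (f i) (f (i + 1)) by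
    obtain ⟨n, f, hn, h0, hfn, hf⟩ := id h
    exact ⟨(transDist_le_of_cyclicalMoves h0 hfn hf).trans hn, h⟩
  rcases hs : CS.card with _ | s
  · have hcc : c = c' := by
      funext x
      by_contra hx
      have : x ∈ CS.biUnion id := by simpa [hcover] using hx
      simp [card_eq_zero.mp hs] at this
    exact ⟨0, fun _ => c, Nat.zero_le 2, rfl, hcc, by simp⟩
  obtain ⟨m, v, e, hve⟩ := exists_sigma_enumeration_of_disjoint_cycles c c' CS hs hcyc hcover hdisj
  refine exists_cyclicalMoves_le_two (isCyclicalMove_to_mergedClustering hve) ?_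
  rcases eq_or_ne s 0 with rfl | hs0
  · exact Or.inl (mergedClustering_eq_of_eq_zero rfl hve)
  · exact Or.inr (isCyclicalMove_from_mergedClustering hs0 hve)
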